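/- arXiv:1603.00803 — 8 statements merged into one kernel-verified Lean document; each statement's English description precedes it below -/
import Mathlib

section
/- Let n be a real Lie algebra that is uniform of type (p,q,r) with degree s with respect to a uniform basis B = {v_1,…,v_q} ∪ {z_1,…,z_p}. For each l ∈ {1,…,p}, let J_l ∈ M_q(ℝ) be the q×q real matrix whose (i,j) entry is 1 if [v_j,v_i] = z_l, is −1 if [v_j,v_i] = −z_l, and is 0 otherwise. Then the matrices J_1,…,J_p are pairwise orthogonal with respect to the Frobenius inner product, i.e., trace(J_k · J_lᵀ) = 0 whenever k ≠ l; moreover for every l, trace(J_l · J_lᵀ) = 2r and trace(J_l²) = −2r. -/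
/-- A real Lie algebra `n` is *uniform of type `(p,q,r)` with degree `s`* with respect to the
families `v : Fin q → n` (generators) and `z : Fin p → n` (central vectors), which together
form the uniform basis.  The five conditions are exactly those of the definition of a uniform
Lie algebra:  (1) brackets with the `z`'s vanish; (2) every bracket `⁅v i, v j⁆` is `0` or
`± z k` for some `k`; (3) if `⁅v i, v j⁆ ≠ 0` and `⁅v i, v j⁆ = ± ⁅v i, v k⁆` then `j = k`;
(4) for each `l` there are exactly `r` (unordered) pairs `{i,j}` with `⁅v i, v j⁆ = z l`,
i.e. exactly `r` ordered pairs `(i,j)` with `⁅v i, v j⁆ = z l`; (5) for each `j` there are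
exactly `s` indices `i` with `⁅v i, v j⁆ ≠ 0`. -/
def IsUniform (p q r s : ℕ) {n : Type*} [LieRing n] [LieAlgebra ℝ n]
    (v : Fin q → n) (z : Fin p → n) : Prop :=
  (∀ i j, ⁅v i, z j⁆ = 0) ∧
  (∀ l m, ⁅z l, z m⁆ = 0) ∧
  (∀ i j, ⁅v i, v j⁆ = 0 ∨ ∃ k, ⁅v i, v j⁆ = z k ∨ ⁅v i, v j⁆ = - z k) ∧
  (∀ i j k, ⁅v i, v j⁆ ≠ 0 →
      (⁅v i, v j⁆ = ⁅v i, v k⁆ ∨ ⁅v i, v j⁆ = - ⁅v i, v k⁆) → j = k) ∧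
  (∀ l, {ij : Fin q × Fin q | ⁅v ij.1, v ij.2⁆ = z l}.ncard = r) ∧
  (∀ j, {i : Fin q | ⁅v i, v j⁆ ≠ 0}.ncard = s)

open Classical Matrix

/-! The `z`'s are distinct basis vectors, so no bracket equals both `±z_k` and `±z_l` for
`k ≠ l`, nor both `z_l` and `-z_l`: the supports of `J_k` and `J_l` are disjoint, and the
squared entries of `J_l` count the `r` ordered pairs with bracket `z_l` together with the `r`
pairs with bracket `-z_l`, which are the same pairs swapped. Skew-symmetry of the bracket makes
`J_l` skew-symmetric, so `trace (J_l * J_l) = -trace (J_l * J_lᵀ)`. -/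

section SignMatrix

variable {M : Type*} [AddGroup M] (R : Type*) [Ring R]

noncomputable def signCoeff (w x : M) : R :=
  if x = w then 1 else if x = -w then -1 else 0

/-- With `c i j = ⁅v i, v j⁆` and `w = z l` this is the paper's `J_l`. -/
noncomputable def signMatrix {m : Type*} (c : m → m → M) (w : M) : Matrix m m R :=
  fun i j => signCoeff R w (c j i)

variable {R} {w w' : M}

theorem signCoeff_mul_signCoeff_of_ne (h₁ : w' ≠ w) (h₂ : w' ≠ -w) (x : M) :
    signCoeff R w x * signCoeff R w' x = 0 := by
  have h₃ : w ≠ -w' := fun h => h₂ (by rw [h, neg_neg])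
  unfold signCoeff
  split_ifs <;> simp_all

theorem signCoeff_mul_self (hw : w ≠ -w) (x : M) :
    signCoeff R w x * signCoeff R w x =
      (if x = w then 1 else 0) + (if x = -w then 1 else 0) := by
  unfold signCoeff
  split_ifs <;> simp_all

theorem signCoeff_neg (hw : w ≠ -w) (x : M) : signCoeff R w (-x) = -signCoeff R w x := by
  unfold signCoeff
  split_ifs <;> simp_all [neg_eq_iff_eq_neg]

variable {m : Type*} {c : m → m → M}

theorem signMatrix_transpose (hc : ∀ i j, c j i = -c i j) (hw : w ≠ -w) :
    (signMatrix R c w)ᵀ = -signMatrix R c w := by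
  ext i j
  simp [signMatrix, hc i j, signCoeff_neg hw]

variable [Fintype m]

theorem trace_signMatrix_mul_transpose_of_ne (h₁ : w' ≠ w) (h₂ : w' ≠ -w) :
    trace (signMatrix R c w * (signMatrix R c w')ᵀ) = 0 := by
  simp [← sum_hadamard_eq, signMatrix, signCoeff_mul_signCoeff_of_ne h₁ h₂]

theorem trace_signMatrix_mul_transpose_self (hc : ∀ i j, c j i = -c i j) (hw : w ≠ -w) :
    trace (signMatrix R c w * (signMatrix R c w)ᵀ) =
      2 * {ij : m × m | c ij.1 ij.2 = w}.ncard := by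
  have hneg : ∀ i j, c j i = -w ↔ c i j = w := fun i j => by
    rw [hc, neg_inj]
  calc trace (signMatrix R c w * (signMatrix R c w)ᵀ)
      = ∑ i, ∑ j, ((if c j i = w then 1 else 0) + (if c i j = w then 1 else 0) : R) := by
        simp only [← sum_hadamard_eq, hadamard_apply, signMatrix, signCoeff_mul_self hw, hneg]
    _ = 2 * ∑ ij : m × m, (if c ij.1 ij.2 = w then 1 else 0 : R) := by
        simp only [Fintype.sum_prod_type, two_mul, Finset.sum_add_distrib]
        rw [Finset.sum_comm]
    _ = 2 * {ij : m × m | c ij.1 ij.2 = w}.ncard := by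
        rw [Finset.sum_boole, Set.ncard_eq_toFinset_card', Set.toFinset_ofPred]

theorem Module.Basis.ne_neg {ι : Type*} {V : Type*} [AddCommGroup V] [Module R V]
    [NeZero (2 : R)] (b : Module.Basis ι R V) (i j : ι) : b i ≠ -b j := by
  intro h
  have := congrArg (fun x => b.repr x i) h
  by_cases hij : j = i
  · subst hij
    simp only [Module.Basis.repr_self, Finsupp.single_eq_same, map_neg, Finsupp.coe_neg,
      Pi.neg_apply, eq_neg_iff_add_eq_zero, one_add_one_eq_two] at this
    exact two_ne_zero this
  · simp only [Module.Basis.repr_self, Finsupp.single_eq_same, map_neg, Finsupp.coe_neg,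
      Pi.neg_apply, Finsupp.single_apply, if_neg hij, neg_zero] at this
    exact two_ne_zero (α := R) (by rw [← one_add_one_eq_two, this, add_zero])

end SignMatrix

theorem uniform_J_frobenius_general {p q r s : ℕ}
    {n : Type*} [LieRing n] [LieAlgebra ℝ n] (B : Module.Basis (Fin q ⊕ Fin p) ℝ n)
    (hB : IsUniform p q r s (fun i => B (Sum.inl i)) (fun k => B (Sum.inr k))) :
    let J : Fin p → Matrix (Fin q) (Fin q) ℝ := fun l i j =>
      if ⁅B (Sum.inl j), B (Sum.inl i)⁆ = B (Sum.inr l) then 1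
      else if ⁅B (Sum.inl j), B (Sum.inl i)⁆ = - B (Sum.inr l) then -1
      else 0
    (∀ k l, k ≠ l → Matrix.trace (J k * (J l)ᵀ) = 0) ∧
    (∀ l, Matrix.trace (J l * (J l)ᵀ) = (2 * r : ℝ)) ∧
    (∀ l, Matrix.trace (J l * J l) = - (2 * r : ℝ)) := by
  intro J
  set c : Fin q → Fin q → n := fun i j => ⁅B (Sum.inl i), B (Sum.inl j)⁆
  have hJ : ∀ l, J l = signMatrix ℝ c (B (Sum.inr l)) := fun _ => rfl
  have hc : ∀ i j, c j i = -c i j := fun _ _ => (lie_skew _ _).symm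
  have hz : ∀ k l, B (Sum.inr k) ≠ -B (Sum.inr l) := fun _ _ => B.ne_neg _ _
  have hnorm : ∀ l, trace (J l * (J l)ᵀ) = 2 * r := fun l => by
    rw [hJ, trace_signMatrix_mul_transpose_self hc (hz l l), hB.2.2.2.2.1 l]
  refine ⟨fun k l hkl => ?_, hnorm, fun l => ?_⟩
  · rw [hJ, hJ]
    exact trace_signMatrix_mul_transpose_of_ne
      (fun h => hkl (Sum.inr_injective (B.injective h)).symm) (hz l k)
  · rw [← hnorm, ← trace_neg, ← mul_neg, hJ, signMatrix_transpose hc (hz l l), neg_neg]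

/-- The matrices `J_1, …, J_p` are pairwise orthogonal with respect to the Frobenius inner
product `⟨A,B⟩ = trace (A * Bᵀ)`; moreover `trace (J l * (J l)ᵀ) = 2r` and
`trace (J l * J l) = -2r` for every `l`. -/
theorem uniform_J_frobenius {p q r s : ℕ}
    (hp : 0 < p) (hq : 0 < q) (hr : 0 < r) (hs : 0 < s)
    {n : Type*} [LieRing n] [LieAlgebra ℝ n] (B : Module.Basis (Fin q ⊕ Fin p) ℝ n)
    (hB : IsUniform p q r s (fun i => B (Sum.inl i)) (fun k => B (Sum.inr k))) :
    let J : Fin p → Matrix (Fin q) (Fin q) ℝ := fun l i j =>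
      if ⁅B (Sum.inl j), B (Sum.inl i)⁆ = B (Sum.inr l) then 1
      else if ⁅B (Sum.inl j), B (Sum.inl i)⁆ = - B (Sum.inr l) then -1
      else 0
    (∀ k l, k ≠ l → Matrix.trace (J k * (J l)ᵀ) = 0) ∧
    (∀ l, Matrix.trace (J l * (J l)ᵀ) = (2 * r : ℝ)) ∧
    (∀ l, Matrix.trace (J l * J l) = - (2 * r : ℝ)) :=
  uniform_J_frobenius_general B hB
end

section
/- Let n₁ be a real Lie algebra that is uniform of type (p₁,q₁,r₁) with respect to some uniform basis, and let n₂ be a real Lie algebra that is uniform of type (p₂,q₂,r₂) with respect to some uniform basis. If n₁ and n₂ are isomorphic as Lie algebras, then p₁ = p₂ and q₁ = q₂. -/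
open LieAlgebra LieModule

theorem LieEquiv.finrank_center_eq {R L₁ L₂ : Type*} [CommRing R] [LieRing L₁] [LieAlgebra R L₁]
    [LieRing L₂] [LieAlgebra R L₂] (e : L₁ ≃ₗ⁅R⁆ L₂) :
    Module.finrank R (center R L₁) = Module.finrank R (center R L₂) := by
  have hmap : (center R L₁).toSubmodule.map (e.toLinearEquiv : L₁ →ₗ[R] L₂) =
      (center R L₂).toSubmodule := by
    ext x
    simp only [Submodule.mem_map, LieSubmodule.mem_toSubmodule, mem_maxTrivSubmodule]
    refine ⟨?_, fun h => ⟨e.symm x, fun y => ?_, e.apply_symm_apply x⟩⟩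
    · rintro ⟨w, hw, rfl⟩ y
      rw [← e.apply_symm_apply y]
      exact (e.map_lie _ _).symm.trans ((congrArg e (hw _)).trans (map_zero e))
    · rw [← e.symm_apply_apply y]
      exact (e.symm.map_lie _ _).symm.trans ((congrArg e.symm (h _)).trans (map_zero e.symm))
  have := LinearEquiv.finrank_map_eq e.toLinearEquiv (center R L₁).toSubmodule
  rw [hmap] at this
  exact this.symm

namespace IsUniform

variable {p q r s : ℕ} {n : Type*} [LieRing n] [LieAlgebra ℝ n]

theorem eq_of_lie_eq_pm {v : Fin q → n} {z : Fin p → n} (hB : IsUniform p q r s v z)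
    {i i' j : Fin q} {k : Fin p} (hz : z k ≠ 0)
    (hi : ⁅v j, v i⁆ = z k ∨ ⁅v j, v i⁆ = -z k) (hi' : ⁅v j, v i'⁆ = z k ∨ ⁅v j, v i'⁆ = -z k) :
    i = i' := by
  refine hB.2.2.2.1 j i i' (by rcases hi with h | h <;> simp [h, hz]) ?_
  rcases hi with h | h <;> rcases hi' with h' | h' <;> simp [h, h']

variable {B : Module.Basis (Fin q ⊕ Fin p) ℝ n}

theorem repr_lie_inr_eq_zero
    (hB : IsUniform p q r s (fun i => B (Sum.inl i)) (fun k => B (Sum.inr k)))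
    {i j : Fin q} {k : Fin p}
    (hk : ⁅B (Sum.inl j), B (Sum.inl i)⁆ = B (Sum.inr k) ∨
      ⁅B (Sum.inl j), B (Sum.inl i)⁆ = -B (Sum.inr k))
    {u : Fin q ⊕ Fin p} (hu : u ≠ Sum.inl i) :
    B.repr ⁅B (Sum.inl j), B u⁆ (Sum.inr k) = 0 := by
  rcases u with i' | k'
  · rcases hB.2.2.1 j i' with h | ⟨k', hk'⟩
    · simp [h]
    · have hk'k : k' ≠ k := by
        rintro rfl
        exact hu (congrArg Sum.inl (hB.eq_of_lie_eq_pm (B.ne_zero _) hk hk').symm)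
      rcases hk' with h | h <;> simp [h, hk'k]
  · simp [hB.1 j k']

theorem repr_lie_inr
    (hB : IsUniform p q r s (fun i => B (Sum.inl i)) (fun k => B (Sum.inr k)))
    {i j : Fin q} {k : Fin p}
    (hk : ⁅B (Sum.inl j), B (Sum.inl i)⁆ = B (Sum.inr k) ∨
      ⁅B (Sum.inl j), B (Sum.inl i)⁆ = -B (Sum.inr k)) (x : n) :
    B.repr ⁅B (Sum.inl j), x⁆ (Sum.inr k) =
      B.repr x (Sum.inl i) * B.repr ⁅B (Sum.inl j), B (Sum.inl i)⁆ (Sum.inr k) := by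
  conv_lhs => rw [← B.sum_repr x]
  simp only [lie_sum, lie_smul, map_sum, map_smul, Finset.sum_apply', Finsupp.smul_apply,
    smul_eq_mul]
  exact Finset.sum_eq_single _ (fun u _ hu => by rw [hB.repr_lie_inr_eq_zero hk hu, mul_zero])
    (by simp)

theorem repr_inl_eq_zero_of_mem_center
    (hB : IsUniform p q r s (fun i => B (Sum.inl i)) (fun k => B (Sum.inr k))) (hs : 0 < s)
    {x : n} (hx : x ∈ center ℝ n) (i : Fin q) : B.repr x (Sum.inl i) = 0 := by
  obtain ⟨j, hj⟩ : {j : Fin q | ⁅B (Sum.inl j), B (Sum.inl i)⁆ ≠ 0}.Nonempty :=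
    Set.nonempty_of_ncard_ne_zero (by rw [hB.2.2.2.2.2 i]; omega)
  obtain ⟨k, hk⟩ := (hB.2.2.1 j i).resolve_left hj
  have h := hB.repr_lie_inr hk x
  rw [(mem_maxTrivSubmodule ℝ n n x).1 hx, map_zero, Finsupp.zero_apply] at h
  rcases hk with hk | hk <;> simpa [hk] using h.symm

theorem center_eq_span
    (hB : IsUniform p q r s (fun i => B (Sum.inl i)) (fun k => B (Sum.inr k))) (hs : 0 < s) :
    (center ℝ n).toSubmodule = Submodule.span ℝ (Set.range fun k => B (Sum.inr k)) := by
  have hrange : (Set.range fun k => B (Sum.inr k)) = B '' Set.range Sum.inr := by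
    rw [← Set.range_comp]; rfl
  apply le_antisymm
  · intro x hx
    rw [hrange, B.mem_span_image]
    rintro (i | k) hu
    · exact absurd (hB.repr_inl_eq_zero_of_mem_center hs hx i) (Finsupp.mem_support_iff.1 hu)
    · exact ⟨k, rfl⟩
  · rw [Submodule.span_le]
    rintro _ ⟨k, rfl⟩
    refine (mem_maxTrivSubmodule ℝ n n _).2 fun y => ?_
    rw [← B.sum_repr y, sum_lie]
    refine Finset.sum_eq_zero fun u _ => ?_
    rcases u with i | l
    · rw [smul_lie, hB.1 i k, smul_zero]
    · rw [smul_lie, hB.2.1 l k, smul_zero]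

theorem finrank_center
    (hB : IsUniform p q r s (fun i => B (Sum.inl i)) (fun k => B (Sum.inr k))) (hs : 0 < s) :
    Module.finrank ℝ (center ℝ n) = p := by
  have hz : LinearIndependent ℝ fun k => B (Sum.inr k) :=
    B.linearIndependent.comp Sum.inr Sum.inr_injective
  rw [← Fintype.card_fin p, ← finrank_span_eq_card hz, ← hB.center_eq_span hs]
  rfl

end IsUniform

theorem uniform_pq_invariant_general {p₁ q₁ r₁ s₁ p₂ q₂ r₂ s₂ : ℕ}
    (hs₁ : 0 < s₁)
    (hs₂ : 0 < s₂)
    {n₁ n₂ : Type*} [LieRing n₁] [LieAlgebra ℝ n₁] [LieRing n₂] [LieAlgebra ℝ n₂]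
    (B₁ : Module.Basis (Fin q₁ ⊕ Fin p₁) ℝ n₁)
    (hB₁ : IsUniform p₁ q₁ r₁ s₁ (fun i => B₁ (Sum.inl i)) (fun k => B₁ (Sum.inr k)))
    (B₂ : Module.Basis (Fin q₂ ⊕ Fin p₂) ℝ n₂)
    (hB₂ : IsUniform p₂ q₂ r₂ s₂ (fun i => B₂ (Sum.inl i)) (fun k => B₂ (Sum.inr k)))
    (e : n₁ ≃ₗ⁅ℝ⁆ n₂) :
    p₁ = p₂ ∧ q₁ = q₂ := by
  have hp : p₁ = p₂ := by
    rw [← hB₁.finrank_center hs₁, ← hB₂.finrank_center hs₂, e.finrank_center_eq]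
  have hdim : q₁ + p₁ = q₂ + p₂ := by
    simpa [Module.finrank_eq_card_basis B₁, Module.finrank_eq_card_basis B₂] using
      e.toLinearEquiv.finrank_eq
  exact ⟨hp, by omega⟩

/-- If `n₁` is uniform of type `(p₁,q₁,r₁)` and `n₂` is uniform of type `(p₂,q₂,r₂)` and
`n₁ ≅ n₂` as Lie algebras, then `p₁ = p₂` and `q₁ = q₂`. -/
theorem uniform_pq_invariant {p₁ q₁ r₁ s₁ p₂ q₂ r₂ s₂ : ℕ}
    (hp₁ : 0 < p₁) (hq₁ : 0 < q₁) (hr₁ : 0 < r₁) (hs₁ : 0 < s₁)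
    (hp₂ : 0 < p₂) (hq₂ : 0 < q₂) (hr₂ : 0 < r₂) (hs₂ : 0 < s₂)
    {n₁ n₂ : Type*} [LieRing n₁] [LieAlgebra ℝ n₁] [LieRing n₂] [LieAlgebra ℝ n₂]
    (B₁ : Module.Basis (Fin q₁ ⊕ Fin p₁) ℝ n₁)
    (hB₁ : IsUniform p₁ q₁ r₁ s₁ (fun i => B₁ (Sum.inl i)) (fun k => B₁ (Sum.inr k)))
    (B₂ : Module.Basis (Fin q₂ ⊕ Fin p₂) ℝ n₂)
    (hB₂ : IsUniform p₂ q₂ r₂ s₂ (fun i => B₂ (Sum.inl i)) (fun k => B₂ (Sum.inr k)))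
    (e : n₁ ≃ₗ⁅ℝ⁆ n₂) :
    p₁ = p₂ ∧ q₁ = q₂ :=
  uniform_pq_invariant_general hs₁ hs₂ B₁ hB₁ B₂ hB₂ e
end

section
/- Let n and m be real Lie algebras, where n is uniform of type (p,q,1) with respect to a uniform basis {v_1,…,v_q} ∪ {z_1,…,z_p} and m is uniform of type (p,q,1) with respect to a uniform basis {x_1,…,x_q} ∪ {w_1,…,w_p}. Write [v_i,v_j] = Σ_k α_{ij}^k z_k and [x_i,x_j] = Σ_k β_{ij}^k w_k, and suppose n and m are associates with respect to these bases, i.e., (α_{ij}^k)² = (β_{ij}^k)² for all i,j,k. Then n and m are isomorphic as Lie algebras. -/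
/-! With `r = 1` every central vector `z k` is the bracket of exactly one ordered pair of
generators, so for associates the matching bracket in `m` is `σ k • w k` with `σ k = ±1`, and a
bracket of `m` vanishes wherever the corresponding one of `n` does. Rescaling each `w k` by
`σ k` thus gives a basis of `m` with the same structure constants as the uniform basis of `n`. -/

open Module

section LieBasis

variable {ι R L L' : Type*} [CommRing R] [LieRing L] [LieAlgebra R L] [LieRing L'] [LieAlgebra R L']

theorem Module.Basis.map_lie_of_map_lie_basis (b : Basis ι R L) (f : L →ₗ[R] L')
    (h : ∀ i j, f ⁅b i, b j⁆ = ⁅f (b i), f (b j)⁆) (x y : L) : f ⁅x, y⁆ = ⁅f x, f y⁆ := by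
  have : (LieModule.toEnd R L L : L →ₗ[R] Module.End R L).compr₂ f =
      (LieModule.toEnd R L' L' : L' →ₗ[R] Module.End R L').compl₁₂ f f :=
    LinearMap.ext_basis b b h
  exact LinearMap.congr_fun₂ this x y

end LieBasis

section SquaredCoordinates

variable {ι R M N : Type*} [CommRing R] [NoZeroDivisors R] [AddCommGroup M] [Module R M]
  [AddCommGroup N] [Module R N] (B : Basis ι R M) (C : Basis ι R N) {x : M} {y : N}

theorem Module.Basis.eq_zero_of_sq_repr_eq (h : ∀ a, (B.repr x a) ^ 2 = (C.repr y a) ^ 2)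
    (hx : x = 0) : y = 0 := by
  refine C.repr.injective (Finsupp.ext fun a => ?_)
  simpa [hx, eq_comm (a := (0 : R))] using h a

theorem Module.Basis.eq_repr_smul_of_sq_repr_eq (h : ∀ a, (B.repr x a) ^ 2 = (C.repr y a) ^ 2)
    {k : ι} (hx : x = B k) : y = C.repr y k • C k := by
  refine C.repr.injective (Finsupp.ext fun a => ?_)
  rcases eq_or_ne k a with rfl | hka
  · simp
  · have hxa := h a
    rw [hx, B.repr_self, Finsupp.single_eq_of_ne hka.symm, eq_comm, zero_pow two_ne_zero,
      pow_eq_zero_iff two_ne_zero] at hxa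
    simp [hxa, Finsupp.single_eq_of_ne hka.symm]

end SquaredCoordinates

namespace IsUniform

variable {p q s : ℕ} {n : Type*} [LieRing n] [LieAlgebra ℝ n] {v : Fin q → n} {z : Fin p → n}

theorem existsUnique_lie_eq (h : IsUniform p q 1 s v z) (l : Fin p) :
    ∃! ij : Fin q × Fin q, ⁅v ij.1, v ij.2⁆ = z l := by
  obtain ⟨ij, hij⟩ := Set.ncard_eq_one.mp (h.2.2.2.2.1 l)
  refine ⟨ij, ?_, fun ij' h' => ?_⟩
  · exact (Set.ext_iff.mp hij ij).mpr rfl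
  · exact (Set.ext_iff.mp hij ij').mp h'

end IsUniform

def Module.Basis.AreAssociates {ι R L L' : Type*} [CommRing R] [LieRing L] [LieAlgebra R L]
    [LieRing L'] [LieAlgebra R L'] (B : Basis ι R L) (C : Basis ι R L') : Prop :=
  ∀ a b c, (B.repr ⁅B a, B b⁆ c) ^ 2 = (C.repr ⁅C a, C b⁆ c) ^ 2

section UniformBasis

variable {p q r s : ℕ} {n m : Type*} [LieRing n] [LieAlgebra ℝ n] [LieRing m] [LieAlgebra ℝ m]
  (B : Basis (Fin q ⊕ Fin p) ℝ n) (C : Basis (Fin q ⊕ Fin p) ℝ m)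

theorem IsUniform.exists_sign_of_areAssociates
    (hB : IsUniform p q 1 s (fun i => B (Sum.inl i)) (fun k => B (Sum.inr k)))
    (hBC : B.AreAssociates C) :
    ∃ σ : Fin p → ℝ, (∀ k, σ k ^ 2 = 1) ∧ ∀ i j k,
      ⁅B (Sum.inl i), B (Sum.inl j)⁆ = B (Sum.inr k) →
        ⁅C (Sum.inl i), C (Sum.inl j)⁆ = σ k • C (Sum.inr k) := by
  choose P hP using hB.existsUnique_lie_eq
  refine ⟨fun k => C.repr ⁅C (Sum.inl (P k).1), C (Sum.inl (P k).2)⁆ (Sum.inr k),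
    fun k => ?_, fun i j k h => ?_⟩
  · have hk := hBC (Sum.inl (P k).1) (Sum.inl (P k).2) (Sum.inr k)
    rw [(hP k).1, B.repr_self, Finsupp.single_eq_same, one_pow] at hk
    exact hk.symm
  · have hij : P k = (i, j) := ((hP k).2 (i, j) h).symm
    simp only [hij]
    exact B.eq_repr_smul_of_sq_repr_eq C (hBC _ _) h

theorem IsUniform.nonempty_lieEquiv_of_areAssociates
    (hB : IsUniform p q r s (fun i => B (Sum.inl i)) (fun k => B (Sum.inr k)))
    (hBC : B.AreAssociates C) (σ : Fin p → ℝ) (hσ : ∀ k, IsUnit (σ k))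
    (hσBC : ∀ i j k, ⁅B (Sum.inl i), B (Sum.inl j)⁆ = B (Sum.inr k) →
      ⁅C (Sum.inl i), C (Sum.inl j)⁆ = σ k • C (Sum.inr k)) :
    Nonempty (n ≃ₗ⁅ℝ⁆ m) := by
  obtain ⟨hvz, hzz, hvv, -⟩ := hB
  let w : Fin q ⊕ Fin p → ℝ := Sum.elim 1 σ
  have hw : ∀ a, IsUnit (w a) := by
    rintro (i | k)
    exacts [isUnit_one, hσ k]
  let e := B.equiv (C.isUnitSMul hw) (Equiv.refl _)
  have he : ∀ a, e (B a) = w a • C a := fun a => by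
    simp [e, Basis.equiv_apply, Basis.isUnitSMul_apply]
  have hzero : ∀ a b, ⁅B a, B b⁆ = 0 → e ⁅B a, B b⁆ = ⁅e (B a), e (B b)⁆ := fun a b h => by
    rw [h, he, he, smul_lie, lie_smul, B.eq_zero_of_sq_repr_eq C (hBC a b) h]
    simp
  have hpos : ∀ i j k, ⁅B (Sum.inl i), B (Sum.inl j)⁆ = B (Sum.inr k) →
      e ⁅B (Sum.inl i), B (Sum.inl j)⁆ = ⁅e (B (Sum.inl i)), e (B (Sum.inl j))⁆ := fun i j k h => by
    simp [h, he, w, hσBC i j k h]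
  refine ⟨{ e with map_lie' := B.map_lie_of_map_lie_basis e.toLinearMap ?_ _ _ }⟩
  rintro (i | k) (j | l)
  · rcases hvv i j with h | ⟨k, h | h⟩
    · exact hzero _ _ h
    · exact hpos i j k h
    · have h' : ⁅B (Sum.inl j), B (Sum.inl i)⁆ = B (Sum.inr k) := by rw [← lie_skew, h, neg_neg]
      simp only [LinearEquiv.coe_coe]
      rw [← lie_skew, map_neg, hpos j i k h', lie_skew]
  · exact hzero _ _ (hvz i l)
  · exact hzero _ _ (by rw [← lie_skew, hvz j k, neg_zero])
  · exact hzero _ _ (hzz k l)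

end UniformBasis

theorem uniform_r_one_associates_isomorphic_general {p q s₁ : ℕ}
    {n m : Type*} [LieRing n] [LieAlgebra ℝ n] [LieRing m] [LieAlgebra ℝ m]
    (B : Module.Basis (Fin q ⊕ Fin p) ℝ n)
    (hB : IsUniform p q 1 s₁ (fun i => B (Sum.inl i)) (fun k => B (Sum.inr k)))
    (C : Module.Basis (Fin q ⊕ Fin p) ℝ m)
    (hassoc : ∀ (i j : Fin q ⊕ Fin p) (a : Fin q ⊕ Fin p),
      (B.repr ⁅B i, B j⁆ a) ^ 2 = (C.repr ⁅C i, C j⁆ a) ^ 2) :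
    Nonempty (n ≃ₗ⁅ℝ⁆ m) := by
  obtain ⟨σ, hσ, hσBC⟩ := hB.exists_sign_of_areAssociates B C hassoc
  exact hB.nonempty_lieEquiv_of_areAssociates B C hassoc σ
    (fun k => IsUnit.of_pow_eq_one (hσ k) two_ne_zero) hσBC

/-- If `n` and `m` are uniform of type `(p,q,1)` with respect to uniform bases `B` and `C`,
and they are associates with respect to these bases (their structure constants agree up to
sign), then `n` and `m` are isomorphic Lie algebras. -/
theorem uniform_r_one_associates_isomorphic {p q s₁ s₂ : ℕ}
    (hp : 0 < p) (hq : 0 < q) (hs₁ : 0 < s₁) (hs₂ : 0 < s₂)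
    {n m : Type*} [LieRing n] [LieAlgebra ℝ n] [LieRing m] [LieAlgebra ℝ m]
    (B : Module.Basis (Fin q ⊕ Fin p) ℝ n)
    (hB : IsUniform p q 1 s₁ (fun i => B (Sum.inl i)) (fun k => B (Sum.inr k)))
    (C : Module.Basis (Fin q ⊕ Fin p) ℝ m)
    (hC : IsUniform p q 1 s₂ (fun i => C (Sum.inl i)) (fun k => C (Sum.inr k)))
    (hassoc : ∀ (i j : Fin q ⊕ Fin p) (a : Fin q ⊕ Fin p),
      (B.repr ⁅B i, B j⁆ a) ^ 2 = (C.repr ⁅C i, C j⁆ a) ^ 2) :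
    Nonempty (n ≃ₗ⁅ℝ⁆ m) :=
  uniform_r_one_associates_isomorphic_general B hB C hassoc
end

section
/- Let n be a real Lie algebra that is uniform of type (p,q,r) with degree s with respect to some uniform basis. Then: (1) 2rp = sq; (2) s ≤ p and rp ≤ q(q−1)/2, so in particular s ≤ p ≤ rp = sq/2 ≤ q(q−1)/2; and (3) 2 ≤ 2r ≤ q. -/
/-!
Count the ordered pairs `(i, j)` with `⁅v i, v j⁆ ≠ 0` in two ways. Each column contains `s` of
them, so there are `s q`; each of the `2 p` signed vectors `±z k` is the value of exactly `r` of
them (for `-z k` by skew-symmetry), so there are `2 r p`. In a fixed row the nonzero brackets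
are pairwise distinct and no two are opposite, so together with their negatives they are `2 s`
distinct signed vectors, whence `s ≤ p`; a column misses the diagonal, whence `s ≤ q - 1`.
-/

open Finset Pointwise

theorem Set.ncard_setOf_prod_eq_mul {α β : Type*} [Fintype α] [Fintype β] {P : α → β → Prop}
    {s : ℕ} (h : ∀ b, {a | P a b}.ncard = s) :
    {x : α × β | P x.1 x.2}.ncard = s * Fintype.card β := by
  classical
  simp only [Set.ncard_eq_toFinset_card', Set.toFinset_ofPred] at h ⊢
  rw [card_filter, Fintype.sum_prod_type_right]
  simp only [← card_filter, h, sum_const, card_univ, smul_eq_mul, mul_comm]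

theorem Finset.two_mul_card_le_of_disjoint_neg {α : Type*} [DecidableEq α] [InvolutiveNeg α]
    {A S : Finset α} (hS : -S = S) (hAS : A ⊆ S) (hA : Disjoint A (-A)) : 2 * #A ≤ #S :=
  calc 2 * #A = #(A ∪ -A) := by rw [card_union_of_disjoint hA, card_neg, two_mul]
    _ ≤ #S := card_le_card (union_subset hAS (hS ▸ neg_subset_neg hAS))

theorem LinearIndependent.ne_neg {ι R M : Type*} [Ring R] [CharZero R] [AddCommGroup M]
    [Module R M] {z : ι → M} (hz : LinearIndependent R z) (k l : ι) : z k ≠ -z l := by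
  intro h
  by_cases hkl : k = l
  · subst hkl
    have : (2 : R) • z k = (0 : R) • z k := by rw [two_smul, zero_smul, ← neg_add_cancel (z k), ← h]
    exact two_ne_zero (hz.smul_left_injective k this)
  · have := (LinearIndepOn.pair_iff z hkl).mp (hz.linearIndepOn _) 1 1 (by simp [h])
    exact one_ne_zero this.1

theorem ncard_setOf_lie_eq_neg {L ι : Type*} [LieRing L] (v : ι → L) (w : L) :
    {x : ι × ι | ⁅v x.1, v x.2⁆ = -w}.ncard = {x : ι × ι | ⁅v x.1, v x.2⁆ = w}.ncard := by
  have : {x : ι × ι | ⁅v x.1, v x.2⁆ = -w} = Prod.swap '' {x | ⁅v x.1, v x.2⁆ = w} := by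
    rw [Set.image_swap_eq_preimage_swap]
    ext ⟨i, j⟩
    simp only [Set.mem_ofPred_eq, Set.mem_preimage, Prod.fst_swap, Prod.snd_swap]
    rw [← lie_skew, neg_inj]
  rw [this, Set.ncard_image_of_injective _ Prod.swap_injective]

section SignedVectors

variable {ι M : Type*} [Fintype ι] [DecidableEq M] [AddCommGroup M]

def signedVectors (z : ι → M) : Finset M := univ.image z ∪ -univ.image z

variable {z : ι → M}

theorem mem_signedVectors {w : M} : w ∈ signedVectors z ↔ ∃ k, w = z k ∨ w = -z k := by
  simp only [signedVectors, mem_union, mem_image, mem_univ, true_and, mem_neg, neg_eq_iff_eq_neg]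
  grind

theorem neg_signedVectors : -signedVectors z = signedVectors z := by
  ext w
  rw [mem_neg', mem_signedVectors, mem_signedVectors]
  simp only [neg_eq_iff_eq_neg, neg_neg, or_comm]

variable {R : Type*} [Ring R] [CharZero R] [Module R M]

theorem LinearIndependent.card_signedVectors (hz : LinearIndependent R z) :
    #(signedVectors z) = 2 * Fintype.card ι := by
  have hdisj : Disjoint (univ.image z) (-univ.image z) := by
    simp only [disjoint_left, mem_image, mem_univ, true_and, mem_neg]
    rintro _ ⟨k, rfl⟩ ⟨_, ⟨l, rfl⟩, h⟩
    exact hz.ne_neg k l h.symm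
  rw [signedVectors, card_union_of_disjoint hdisj, card_neg,
    card_image_of_injective _ hz.injective, card_univ, two_mul]

theorem LinearIndependent.ne_neg_of_mem_signedVectors (hz : LinearIndependent R z) {w : M}
    (hw : w ∈ signedVectors z) : w ≠ -w := by
  obtain ⟨k, rfl | rfl⟩ := mem_signedVectors.mp hw
  · exact hz.ne_neg k k
  · rw [neg_neg]
    exact (hz.ne_neg k k).symm

end SignedVectors

namespace IsUniform

variable {p q r s : ℕ} {n : Type*} [LieRing n] [LieAlgebra ℝ n] {v : Fin q → n} {z : Fin p → n}

theorem ncard_lie_ne_zero_eq_s_mul_q (h : IsUniform p q r s v z) :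
    {x : Fin q × Fin q | ⁅v x.1, v x.2⁆ ≠ 0}.ncard = s * q := by
  simpa using Set.ncard_setOf_prod_eq_mul h.2.2.2.2.2

theorem ncard_lie_ne_zero_eq_r_mul_two_mul_p (h : IsUniform p q r s v z) (hz : LinearIndependent ℝ z) :
    {x : Fin q × Fin q | ⁅v x.1, v x.2⁆ ≠ 0}.ncard = r * (2 * p) := by
  classical
  rw [show 2 * p = #(signedVectors z) by rw [hz.card_signedVectors, Fintype.card_fin],
    Set.ncard_eq_toFinset_card', Set.toFinset_ofPred]
  have hmaps : Set.MapsTo (fun x : Fin q × Fin q => ⁅v x.1, v x.2⁆)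
      ↑(univ.filter fun x : Fin q × Fin q => ⁅v x.1, v x.2⁆ ≠ 0) ↑(signedVectors z) := by
    intro x hx
    simp only [coe_filter, mem_univ, true_and, Set.mem_ofPred_eq] at hx
    exact mem_signedVectors.mpr ((h.2.2.1 x.1 x.2).resolve_left hx)
  rw [card_eq_sum_card_fiberwise hmaps, sum_const_nat, mul_comm]
  intro w hw
  have hw0 : w ≠ 0 := fun h0 => hz.ne_neg_of_mem_signedVectors hw (by rw [h0, neg_zero])
  rw [filter_filter, ← Set.ncard_coe_finset]
  have hfiber : ↑{x ∈ (univ : Finset (Fin q × Fin q)) | ⁅v x.1, v x.2⁆ ≠ 0 ∧ ⁅v x.1, v x.2⁆ = w} =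
      {x : Fin q × Fin q | ⁅v x.1, v x.2⁆ = w} := by
    ext x
    simp only [coe_filter, mem_univ, true_and, Set.mem_ofPred_eq, and_iff_right_iff_imp]
    exact fun hx => hx ▸ hw0
  obtain ⟨k, rfl | rfl⟩ := mem_signedVectors.mp hw
  · rw [hfiber, h.2.2.2.2.1 k]
  · rw [hfiber, ncard_setOf_lie_eq_neg, h.2.2.2.2.1 k]

theorem two_mul_r_mul_p_eq (h : IsUniform p q r s v z) (hz : LinearIndependent ℝ z) :
    2 * r * p = s * q := by
  rw [← h.ncard_lie_ne_zero_eq_s_mul_q, h.ncard_lie_ne_zero_eq_r_mul_two_mul_p hz]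
  ring

theorem s_le_q_sub_one (h : IsUniform p q r s v z) (j : Fin q) : s ≤ q - 1 := by
  have hsub : {i | ⁅v i, v j⁆ ≠ 0} ⊆ {j}ᶜ := fun i hi hij => hi (hij ▸ lie_self (v i))
  calc s = {i | ⁅v i, v j⁆ ≠ 0}.ncard := (h.2.2.2.2.2 j).symm
    _ ≤ ({j}ᶜ : Set (Fin q)).ncard := Set.ncard_le_ncard hsub
    _ = q - 1 := by rw [Set.ncard_compl, Set.ncard_singleton, Nat.card_eq_fintype_card,
      Fintype.card_fin]

theorem s_le_p (h : IsUniform p q r s v z) (hz : LinearIndependent ℝ z) (j : Fin q) :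
    s ≤ p := by
  classical
  set row := univ.filter fun i => ⁅v j, v i⁆ ≠ 0
  set A := row.image fun i => ⁅v j, v i⁆
  have hrow : #row = s := by
    rw [← h.2.2.2.2.2 j, ← Set.ncard_coe_finset]
    congr 1
    ext i
    simp only [row, coe_filter, mem_univ, true_and, Set.mem_ofPred_eq, ne_eq]
    rw [← lie_skew, neg_eq_zero]
  have hA : #A = s := by
    rw [card_image_of_injOn, hrow]
    intro i hi i' _ hii'
    exact h.2.2.2.1 j i i' (mem_filter.mp hi).2 (Or.inl hii')
  have hAS : A ⊆ signedVectors z := by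
    simp only [A, row, subset_iff, mem_image, mem_filter, mem_univ, true_and]
    rintro _ ⟨i, hi, rfl⟩
    exact mem_signedVectors.mpr ((h.2.2.1 j i).resolve_left hi)
  have hdisj : Disjoint A (-A) := by
    rw [disjoint_left]
    intro w hw hw'
    obtain ⟨i, hi, rfl⟩ := mem_image.mp hw
    obtain ⟨i', -, hi'⟩ := mem_image.mp (mem_neg'.mp hw')
    have hii' : i = i' := h.2.2.2.1 j i i' (mem_filter.mp hi).2 (Or.inr (by rw [hi', neg_neg]))
    subst hii'
    exact hz.ne_neg_of_mem_signedVectors (hAS hw) hi'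
  have := two_mul_card_le_of_disjoint_neg neg_signedVectors hAS hdisj
  rw [hA, hz.card_signedVectors, Fintype.card_fin] at this
  omega

end IsUniform

theorem uniform_parameter_constraints_general {p q r s : ℕ}
    (hp : 0 < p) (hr : 0 < r)
    {n : Type*} [LieRing n] [LieAlgebra ℝ n] (B : Module.Basis (Fin q ⊕ Fin p) ℝ n)
    (hB : IsUniform p q r s (fun i => B (Sum.inl i)) (fun k => B (Sum.inr k))) :
    2 * r * p = s * q ∧
    s ≤ p ∧ p ≤ r * p ∧ r * p = s * q / 2 ∧ r * p ≤ q * (q - 1) / 2 ∧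
    2 ≤ 2 * r ∧ 2 * r ≤ q := by
  have hz : LinearIndependent ℝ fun k => B (Sum.inr k) :=
    B.linearIndependent.comp _ Sum.inr_injective
  have hcount := hB.two_mul_r_mul_p_eq hz
  have hcount' : s * q = 2 * (r * p) := by rw [← hcount, mul_assoc]
  have hq : 0 < q := Nat.pos_of_mul_pos_left (show 0 < s * q by rw [hcount']; positivity)
  have hsp := hB.s_le_p hz ⟨0, hq⟩
  have hsq := hB.s_le_q_sub_one ⟨0, hq⟩
  refine ⟨hcount, hsp, Nat.le_mul_of_pos_left p hr, by omega, ?_, by omega, ?_⟩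
  · rw [Nat.le_div_iff_mul_le two_pos]
    calc r * p * 2 = s * q := by rw [hcount', mul_comm]
      _ ≤ (q - 1) * q := Nat.mul_le_mul_right q hsq
      _ = q * (q - 1) := mul_comm _ _
  · refine Nat.le_of_mul_le_mul_right ?_ hp
    calc 2 * r * p = s * q := hcount
      _ ≤ p * q := Nat.mul_le_mul_right q hsp
      _ = q * p := mul_comm _ _

/-- Constraints on the parameters of a uniform Lie algebra of type `(p,q,r)` with degree `s`:
`2rp = sq`, `s ≤ p ≤ rp = sq/2 ≤ q(q-1)/2`, and `2 ≤ 2r ≤ q`. -/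
theorem uniform_parameter_constraints {p q r s : ℕ}
    (hp : 0 < p) (hq : 0 < q) (hr : 0 < r) (hs : 0 < s)
    {n : Type*} [LieRing n] [LieAlgebra ℝ n] (B : Module.Basis (Fin q ⊕ Fin p) ℝ n)
    (hB : IsUniform p q r s (fun i => B (Sum.inl i)) (fun k => B (Sum.inr k))) :
    2 * r * p = s * q ∧
    s ≤ p ∧ p ≤ r * p ∧ r * p = s * q / 2 ∧ r * p ≤ q * (q - 1) / 2 ∧
    2 ≤ 2 * r ∧ 2 * r ≤ q :=
  uniform_parameter_constraints_general hp hr B hB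
end

section
/- Let n be a real Lie algebra that is uniform of type (p,q,r) with degree s with respect to a uniform basis B = {v_1,…,v_q} ∪ {z_1,…,z_p}. Suppose φ is a permutation of {1,…,q} and σ is a permutation of {1,…,p} such that for all i, j ∈ {1,…,q} and all k ∈ {1,…,p}: [v_i,v_j] = z_k if and only if [v_{φ(i)},v_{φ(j)}] = z_{σ(k)}. Then the linear map φ̂ : n → n determined by φ̂(v_i) = v_{φ(i)} and φ̂(z_k) = z_{σ(k)} is a Lie algebra automorphism of n. Moreover, the assignment (φ,σ) ↦ φ̂ from the group of such pairs (a color-permuting automorphism of the associated colored directed graph) into the automorphism group of n is an injective group homomorphism. -/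
/-- The linear map `φ̂` determined by `φ̂ (v i) = v (φ i)` and `φ̂ (z k) = z (σ k)`. -/
noncomputable def hatMap {p q : ℕ} {n : Type*} [LieRing n] [LieAlgebra ℝ n]
    (B : Module.Basis (Fin q ⊕ Fin p) ℝ n) (φ : Equiv.Perm (Fin q)) (σ : Equiv.Perm (Fin p)) :
    n →ₗ[ℝ] n :=
  B.constr ℝ (Sum.elim (fun i => B (Sum.inl (φ i))) (fun k => B (Sum.inr (σ k))))

/-!
A permutation of the uniform basis that respects the colouring of the graph `(i, j) ↦ k`
(whenever `⁅v i, v j⁆ = z k`) respects every bracket of basis vectors: brackets equal to `z k`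
by hypothesis, brackets equal to `- z k` by skew-symmetry, and vanishing brackets because a
nonzero image bracket `± z k'` would pull back to the nonzero bracket `± z (σ⁻¹ k')`.
Bilinearity then extends this to all of `n`. The group-theoretic part only uses that `φ̂`
is the linear extension of the permutation `φ ⊕ σ` of the basis.
-/

open Module

theorem LinearMap.map_lie_of_basis {R L L' ι : Type*} [CommRing R] [LieRing L] [LieAlgebra R L]
    [LieRing L'] [LieAlgebra R L'] (B : Basis ι R L) (f : L →ₗ[R] L')
    (h : ∀ i j, f ⁅B i, B j⁆ = ⁅f (B i), f (B j)⁆) (x y : L) : f ⁅x, y⁆ = ⁅f x, f y⁆ := by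
  have hext : (LinearMap.mk₂ R (fun x y : L => ⁅x, y⁆) add_lie smul_lie lie_add lie_smul).compr₂ f =
      (LinearMap.mk₂ R (fun x y : L' => ⁅x, y⁆) add_lie smul_lie lie_add lie_smul ∘ₗ f).compl₂ f :=
    LinearMap.ext_basis B B h
  exact LinearMap.congr_fun₂ hext x y

section HatMap

variable {p q : ℕ} {n : Type*} [LieRing n] [LieAlgebra ℝ n] (B : Basis (Fin q ⊕ Fin p) ℝ n)

theorem hatMap_basis (φ : Equiv.Perm (Fin q)) (σ : Equiv.Perm (Fin p)) (x : Fin q ⊕ Fin p) :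
    hatMap B φ σ (B x) = B (Equiv.sumCongr φ σ x) := by
  cases x <;> simp [hatMap]

theorem hatMap_mul (φ₁ φ₂ : Equiv.Perm (Fin q)) (σ₁ σ₂ : Equiv.Perm (Fin p)) :
    hatMap B (φ₁ * φ₂) (σ₁ * σ₂) = hatMap B φ₁ σ₁ ∘ₗ hatMap B φ₂ σ₂ :=
  B.ext fun x => by simp [hatMap_basis]

theorem hatMap_one : hatMap B 1 1 = LinearMap.id :=
  B.ext fun x => by simp [hatMap_basis]

theorem hatMap_bijective (φ : Equiv.Perm (Fin q)) (σ : Equiv.Perm (Fin p)) :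
    Function.Bijective (hatMap B φ σ) := by
  have inv_comp : hatMap B φ⁻¹ σ⁻¹ ∘ₗ hatMap B φ σ = LinearMap.id := by
    rw [← hatMap_mul, inv_mul_cancel, inv_mul_cancel, hatMap_one]
  have comp_inv : hatMap B φ σ ∘ₗ hatMap B φ⁻¹ σ⁻¹ = LinearMap.id := by
    rw [← hatMap_mul, mul_inv_cancel, mul_inv_cancel, hatMap_one]
  exact Function.bijective_iff_has_inverse.mpr
    ⟨hatMap B φ⁻¹ σ⁻¹, LinearMap.congr_fun inv_comp, LinearMap.congr_fun comp_inv⟩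

theorem hatMap_injective {φ₁ φ₂ : Equiv.Perm (Fin q)} {σ₁ σ₂ : Equiv.Perm (Fin p)}
    (h : hatMap B φ₁ σ₁ = hatMap B φ₂ σ₂) : φ₁ = φ₂ ∧ σ₁ = σ₂ := by
  have hsum : Equiv.sumCongr φ₁ σ₁ = Equiv.sumCongr φ₂ σ₂ := Equiv.ext fun x =>
    B.injective <| by rw [← hatMap_basis, ← hatMap_basis, h]
  exact Prod.ext_iff.mp (@Equiv.Perm.sumCongrHom_injective _ _ (φ₁, σ₁) (φ₂, σ₂) hsum)

def PreservesColors (φ : Equiv.Perm (Fin q)) (σ : Equiv.Perm (Fin p)) : Prop :=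
  ∀ (i j : Fin q) (k : Fin p),
    ⁅B (Sum.inl i), B (Sum.inl j)⁆ = B (Sum.inr k) ↔
      ⁅B (Sum.inl (φ i)), B (Sum.inl (φ j))⁆ = B (Sum.inr (σ k))

variable {B} {φ : Equiv.Perm (Fin q)} {σ : Equiv.Perm (Fin p)}

theorem PreservesColors.lie_eq_neg_iff (h : PreservesColors B φ σ) (i j : Fin q) (k : Fin p) :
    ⁅B (Sum.inl i), B (Sum.inl j)⁆ = -B (Sum.inr k) ↔
      ⁅B (Sum.inl (φ i)), B (Sum.inl (φ j))⁆ = -B (Sum.inr (σ k)) := by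
  rw [← lie_skew, neg_inj, ← lie_skew (B (Sum.inl (φ i))), neg_inj]
  exact h j i k

theorem PreservesColors.lie_eq_zero {r s : ℕ} (h : PreservesColors B φ σ)
    (hB : IsUniform p q r s (fun i => B (Sum.inl i)) (fun k => B (Sum.inr k))) {i j : Fin q}
    (hij : ⁅B (Sum.inl i), B (Sum.inl j)⁆ = 0) :
    ⁅B (Sum.inl (φ i)), B (Sum.inl (φ j))⁆ = 0 := by
  rcases hB.2.2.1 (φ i) (φ j) with h0 | ⟨k, hk | hk⟩
  · exact h0
  · have := (h i j (σ⁻¹ k)).mpr (by simpa using hk)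
    exact absurd (hij ▸ this).symm (B.ne_zero _)
  · have := (h.lie_eq_neg_iff i j (σ⁻¹ k)).mpr (by simpa using hk)
    exact absurd (neg_eq_zero.mp (hij ▸ this).symm) (B.ne_zero _)

theorem PreservesColors.hatMap_lie_basis {r s : ℕ} (h : PreservesColors B φ σ)
    (hB : IsUniform p q r s (fun i => B (Sum.inl i)) (fun k => B (Sum.inr k)))
    (x y : Fin q ⊕ Fin p) :
    hatMap B φ σ ⁅B x, B y⁆ = ⁅hatMap B φ σ (B x), hatMap B φ σ (B y)⁆ := by
  obtain ⟨hvz, hzz, hvv, -⟩ := id hB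
  simp only [hatMap_basis]
  rcases x with i | k <;> rcases y with j | l <;>
    simp only [Equiv.sumCongr_apply, Sum.map_inl, Sum.map_inr]
  · rcases hvv i j with h0 | ⟨k, hk | hk⟩
    · rw [h0, map_zero, h.lie_eq_zero hB h0]
    · rw [hk, hatMap_basis, (h i j k).mp hk]
      rfl
    · rw [hk, map_neg, hatMap_basis, (h.lie_eq_neg_iff i j k).mp hk]
      rfl
  · rw [hvz, hvz, map_zero]
  · rw [← lie_skew, hvz, ← lie_skew, hvz, neg_zero, map_zero]
  · rw [hzz, hzz, map_zero]

end HatMap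

theorem uniform_colored_automorphism_general {p q r s : ℕ}
    {n : Type*} [LieRing n] [LieAlgebra ℝ n] (B : Module.Basis (Fin q ⊕ Fin p) ℝ n)
    (hB : IsUniform p q r s (fun i => B (Sum.inl i)) (fun k => B (Sum.inr k))) :
    (∀ (φ : Equiv.Perm (Fin q)) (σ : Equiv.Perm (Fin p)),
      (∀ (i j : Fin q) (k : Fin p),
        ⁅B (Sum.inl i), B (Sum.inl j)⁆ = B (Sum.inr k) ↔
          ⁅B (Sum.inl (φ i)), B (Sum.inl (φ j))⁆ = B (Sum.inr (σ k))) →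
      (∀ x y : n, hatMap B φ σ ⁅x, y⁆ = ⁅hatMap B φ σ x, hatMap B φ σ y⁆) ∧
      Function.Bijective (hatMap B φ σ)) ∧
    (∀ (φ₁ φ₂ : Equiv.Perm (Fin q)) (σ₁ σ₂ : Equiv.Perm (Fin p)),
      (∀ (i j : Fin q) (k : Fin p),
        ⁅B (Sum.inl i), B (Sum.inl j)⁆ = B (Sum.inr k) ↔
          ⁅B (Sum.inl (φ₁ i)), B (Sum.inl (φ₁ j))⁆ = B (Sum.inr (σ₁ k))) →
      (∀ (i j : Fin q) (k : Fin p),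
        ⁅B (Sum.inl i), B (Sum.inl j)⁆ = B (Sum.inr k) ↔
          ⁅B (Sum.inl (φ₂ i)), B (Sum.inl (φ₂ j))⁆ = B (Sum.inr (σ₂ k))) →
      hatMap B (φ₁ * φ₂) (σ₁ * σ₂) = (hatMap B φ₁ σ₁) ∘ₗ (hatMap B φ₂ σ₂)) ∧
    (∀ (φ₁ φ₂ : Equiv.Perm (Fin q)) (σ₁ σ₂ : Equiv.Perm (Fin p)),
      hatMap B φ₁ σ₁ = hatMap B φ₂ σ₂ → φ₁ = φ₂ ∧ σ₁ = σ₂) :=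
  ⟨fun φ σ h =>
    ⟨LinearMap.map_lie_of_basis B _ (PreservesColors.hatMap_lie_basis h hB),
      hatMap_bijective B φ σ⟩,
    fun φ₁ φ₂ σ₁ σ₂ _ _ => hatMap_mul B φ₁ φ₂ σ₁ σ₂,
    fun _ _ _ _ => hatMap_injective B⟩

/-- A color-permuting automorphism `(φ,σ)` of the colored directed graph attached to a
uniform Lie algebra (i.e. `⁅v i, v j⁆ = z k ↔ ⁅v (φ i), v (φ j)⁆ = z (σ k)`) induces the
Lie-algebra automorphism `φ̂` of `n`; moreover the assignment `(φ,σ) ↦ φ̂` is an injective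
group homomorphism from the group of color-permuting automorphisms into `Aut(n)`. -/
theorem uniform_colored_automorphism {p q r s : ℕ}
    (hp : 0 < p) (hq : 0 < q) (hr : 0 < r) (hs : 0 < s)
    {n : Type*} [LieRing n] [LieAlgebra ℝ n] (B : Module.Basis (Fin q ⊕ Fin p) ℝ n)
    (hB : IsUniform p q r s (fun i => B (Sum.inl i)) (fun k => B (Sum.inr k))) :
    (∀ (φ : Equiv.Perm (Fin q)) (σ : Equiv.Perm (Fin p)),
      (∀ (i j : Fin q) (k : Fin p),
        ⁅B (Sum.inl i), B (Sum.inl j)⁆ = B (Sum.inr k) ↔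
          ⁅B (Sum.inl (φ i)), B (Sum.inl (φ j))⁆ = B (Sum.inr (σ k))) →
      (∀ x y : n, hatMap B φ σ ⁅x, y⁆ = ⁅hatMap B φ σ x, hatMap B φ σ y⁆) ∧
      Function.Bijective (hatMap B φ σ)) ∧
    (∀ (φ₁ φ₂ : Equiv.Perm (Fin q)) (σ₁ σ₂ : Equiv.Perm (Fin p)),
      (∀ (i j : Fin q) (k : Fin p),
        ⁅B (Sum.inl i), B (Sum.inl j)⁆ = B (Sum.inr k) ↔
          ⁅B (Sum.inl (φ₁ i)), B (Sum.inl (φ₁ j))⁆ = B (Sum.inr (σ₁ k))) →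
      (∀ (i j : Fin q) (k : Fin p),
        ⁅B (Sum.inl i), B (Sum.inl j)⁆ = B (Sum.inr k) ↔
          ⁅B (Sum.inl (φ₂ i)), B (Sum.inl (φ₂ j))⁆ = B (Sum.inr (σ₂ k))) →
      hatMap B (φ₁ * φ₂) (σ₁ * σ₂) = (hatMap B φ₁ σ₁) ∘ₗ (hatMap B φ₂ σ₂)) ∧
    (∀ (φ₁ φ₂ : Equiv.Perm (Fin q)) (σ₁ σ₂ : Equiv.Perm (Fin p)),
      hatMap B φ₁ σ₁ = hatMap B φ₂ σ₂ → φ₁ = φ₂ ∧ σ₁ = σ₂) :=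
  uniform_colored_automorphism_general B hB
end

section
/- Let n₁ be a real Lie algebra that is uniform of type (p₁,q₁,r₁) with degree s₁ with respect to a uniform basis B₁, and let n₂ be a real Lie algebra that is uniform of type (p₂,q₂,r₂) with degree s₂ with respect to a uniform basis B₂. Let n = n₁ ⊕ n₂ be the direct sum Lie algebra and let B be the union of the images of B₁ and B₂ under the natural inclusions i₁ : n₁ → n₁ ⊕ n₂ and i₂ : n₂ → n₁ ⊕ n₂. Then B is a uniform basis for n if and only if r₁ = r₂ and s₁ = s₂; and in that case n is uniform of type (p₁ + p₂, q₁ + q₂, r₁) with degree s₁ with respect to B. -/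
instance prodLieRing {L M : Type*} [LieRing L] [LieRing M] : LieRing (L × M) where
  bracket x y := (⁅x.1, y.1⁆, ⁅x.2, y.2⁆)
  add_lie x y z := Prod.ext (add_lie x.1 y.1 z.1) (add_lie x.2 y.2 z.2)
  lie_add x y z := Prod.ext (lie_add x.1 y.1 z.1) (lie_add x.2 y.2 z.2)
  lie_self x := Prod.ext (lie_self x.1) (lie_self x.2)
  leibniz_lie x y z := Prod.ext (leibniz_lie x.1 y.1 z.1) (leibniz_lie x.2 y.2 z.2)

instance prodLieAlgebra {L M : Type*} [LieRing L] [LieRing M]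
    [LieAlgebra ℝ L] [LieAlgebra ℝ M] : LieAlgebra ℝ (L × M) where
  lie_smul t x y := Prod.ext (lie_smul t x.1 y.1) (lie_smul t x.2 y.2)

section FinAppendProd

variable {L M : Type*} {m n : ℕ}

section Zero
variable [Zero L] [Zero M]

def finAppendProd (x : Fin m → L) (y : Fin n → M) : Fin (m + n) → L × M :=
  Fin.append (fun i => (x i, 0)) (fun j => (0, y j))

@[simp]
lemma finAppendProd_castAdd (x : Fin m → L) (y : Fin n → M) (i : Fin m) :
    finAppendProd x y (Fin.castAdd n i) = (x i, 0) :=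
  Fin.append_left _ _ i

@[simp]
lemma finAppendProd_natAdd (x : Fin m → L) (y : Fin n → M) (j : Fin n) :
    finAppendProd x y (Fin.natAdd m j) = (0, y j) :=
  Fin.append_right _ _ j

end Zero

lemma Module.Basis.prod_reindex_finSumFinEquiv_inl {R : Type*} [Semiring R] [AddCommMonoid L]
    [Module R L] [AddCommMonoid M] [Module R M] {q₁ p₁ q₂ p₂ : ℕ}
    (B₁ : Module.Basis (Fin q₁ ⊕ Fin p₁) R L) (B₂ : Module.Basis (Fin q₂ ⊕ Fin p₂) R M) :
    (fun i => (B₁.prod B₂).reindex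
      ((Equiv.sumSumSumComm (Fin q₁) (Fin p₁) (Fin q₂) (Fin p₂)).trans
        (Equiv.sumCongr finSumFinEquiv finSumFinEquiv)) (Sum.inl i)) =
      finAppendProd (fun i => B₁ (Sum.inl i)) (fun i => B₂ (Sum.inl i)) := by
  funext i
  induction i using Fin.addCases <;> simp [Module.Basis.prod_apply, Equiv.sumSumSumComm]

lemma Module.Basis.prod_reindex_finSumFinEquiv_inr {R : Type*} [Semiring R] [AddCommMonoid L]
    [Module R L] [AddCommMonoid M] [Module R M] {q₁ p₁ q₂ p₂ : ℕ}
    (B₁ : Module.Basis (Fin q₁ ⊕ Fin p₁) R L) (B₂ : Module.Basis (Fin q₂ ⊕ Fin p₂) R M) :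
    (fun k => (B₁.prod B₂).reindex
      ((Equiv.sumSumSumComm (Fin q₁) (Fin p₁) (Fin q₂) (Fin p₂)).trans
        (Equiv.sumCongr finSumFinEquiv finSumFinEquiv)) (Sum.inr k)) =
      finAppendProd (fun k => B₁ (Sum.inr k)) (fun k => B₂ (Sum.inr k)) := by
  funext k
  induction k using Fin.addCases <;> simp [Module.Basis.prod_apply, Equiv.sumSumSumComm]

variable [LieRing L] [LieRing M] {x : Fin m → L} {y : Fin n → M}

lemma mem_range_castAdd_of_lie_finAppendProd_fst_ne_zero {i j : Fin (m + n)}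
    (h : ⁅finAppendProd x y i, finAppendProd x y j⁆.1 ≠ 0) :
    i ∈ Set.range (Fin.castAdd n) ∧ j ∈ Set.range (Fin.castAdd n) := by
  induction i using Fin.addCases <;> induction j using Fin.addCases <;> simp_all

lemma mem_range_natAdd_of_lie_finAppendProd_snd_ne_zero {i j : Fin (m + n)}
    (h : ⁅finAppendProd x y i, finAppendProd x y j⁆.2 ≠ 0) :
    i ∈ Set.range (Fin.natAdd m) ∧ j ∈ Set.range (Fin.natAdd m) := by
  induction i using Fin.addCases <;> induction j using Fin.addCases <;> simp_all

lemma ncard_lie_finAppendProd_eq_inl {a : L} (ha : a ≠ 0) :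
    {ij : Fin (m + n) × Fin (m + n) |
        ⁅finAppendProd x y ij.1, finAppendProd x y ij.2⁆ = (a, 0)}.ncard =
      {ij : Fin m × Fin m | ⁅x ij.1, x ij.2⁆ = a}.ncard := by
  rw [← Set.ncard_preimage_of_injective_subset_range
    ((Fin.castAdd_injective m n).prodMap (Fin.castAdd_injective m n))]
  · congr 1; ext; simp
  · rintro ⟨i, j⟩ (h : ⁅_, _⁆ = _)
    rw [Set.range_prodMap]
    exact mem_range_castAdd_of_lie_finAppendProd_fst_ne_zero (by rw [h]; exact ha)

lemma ncard_lie_finAppendProd_eq_inr {b : M} (hb : b ≠ 0) :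
    {ij : Fin (m + n) × Fin (m + n) |
        ⁅finAppendProd x y ij.1, finAppendProd x y ij.2⁆ = (0, b)}.ncard =
      {ij : Fin n × Fin n | ⁅y ij.1, y ij.2⁆ = b}.ncard := by
  rw [← Set.ncard_preimage_of_injective_subset_range
    ((Fin.natAdd_injective n m).prodMap (Fin.natAdd_injective n m))]
  · congr 1; ext; simp
  · rintro ⟨i, j⟩ (h : ⁅_, _⁆ = _)
    rw [Set.range_prodMap]
    exact mem_range_natAdd_of_lie_finAppendProd_snd_ne_zero (by rw [h]; exact hb)

lemma ncard_lie_finAppendProd_castAdd_ne_zero (j : Fin m) :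
    {i | ⁅finAppendProd x y i, finAppendProd x y (Fin.castAdd n j)⁆ ≠ 0}.ncard =
      {i | ⁅x i, x j⁆ ≠ 0}.ncard := by
  rw [← Set.ncard_preimage_of_injective_subset_range (Fin.castAdd_injective m n)]
  · congr 1; ext; simp
  · intro i h
    have h₁ : ⁅finAppendProd x y i, finAppendProd x y (Fin.castAdd n j)⁆.1 ≠ 0 :=
      fun h₁ => h (Prod.ext h₁ (by simp))
    exact (mem_range_castAdd_of_lie_finAppendProd_fst_ne_zero h₁).1

lemma ncard_lie_finAppendProd_natAdd_ne_zero (j : Fin n) :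
    {i | ⁅finAppendProd x y i, finAppendProd x y (Fin.natAdd m j)⁆ ≠ 0}.ncard =
      {i | ⁅y i, y j⁆ ≠ 0}.ncard := by
  rw [← Set.ncard_preimage_of_injective_subset_range (Fin.natAdd_injective n m)]
  · congr 1; ext; simp
  · intro i h
    have h₂ : ⁅finAppendProd x y i, finAppendProd x y (Fin.natAdd m j)⁆.2 ≠ 0 :=
      fun h₂ => h (Prod.ext (by simp) h₂)
    exact (mem_range_natAdd_of_lie_finAppendProd_snd_ne_zero h₂).1

variable {m' n' : ℕ} {x' : Fin m' → L} {y' : Fin n' → M}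

lemma lie_finAppendProd_eq_zero (hx : ∀ i j, ⁅x i, x' j⁆ = 0) (hy : ∀ i j, ⁅y i, y' j⁆ = 0)
    (i : Fin (m + n)) (j : Fin (m' + n')) :
    ⁅finAppendProd x y i, finAppendProd x' y' j⁆ = 0 := by
  induction i using Fin.addCases <;> induction j using Fin.addCases <;> simp [hx, hy]

lemma lie_finAppendProd_eq_zero_or_eq_or_eq_neg
    (hx : ∀ i j, ⁅x i, x j⁆ = 0 ∨ ∃ k, ⁅x i, x j⁆ = x' k ∨ ⁅x i, x j⁆ = -x' k)
    (hy : ∀ i j, ⁅y i, y j⁆ = 0 ∨ ∃ k, ⁅y i, y j⁆ = y' k ∨ ⁅y i, y j⁆ = -y' k)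
    (i j : Fin (m + n)) :
    ⁅finAppendProd x y i, finAppendProd x y j⁆ = 0 ∨ ∃ k,
      ⁅finAppendProd x y i, finAppendProd x y j⁆ = finAppendProd x' y' k ∨
      ⁅finAppendProd x y i, finAppendProd x y j⁆ = -finAppendProd x' y' k := by
  induction i using Fin.addCases with
  | left i => induction j using Fin.addCases with
    | left j =>
      obtain h | ⟨k, h | h⟩ := hx i j
      · simp [h]
      · exact .inr ⟨Fin.castAdd n' k, .inl (by simp [h])⟩
      · exact .inr ⟨Fin.castAdd n' k, .inr (by simp [h])⟩
    | right j => simp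
  | right i => induction j using Fin.addCases with
    | left j => simp
    | right j =>
      obtain h | ⟨k, h | h⟩ := hy i j
      · simp [h]
      · exact .inr ⟨Fin.natAdd m' k, .inl (by simp [h])⟩
      · exact .inr ⟨Fin.natAdd m' k, .inr (by simp [h])⟩

lemma eq_of_lie_finAppendProd_eq_or_eq_neg
    (hx : ∀ i j k, ⁅x i, x j⁆ ≠ 0 → (⁅x i, x j⁆ = ⁅x i, x k⁆ ∨ ⁅x i, x j⁆ = -⁅x i, x k⁆) → j = k)
    (hy : ∀ i j k, ⁅y i, y j⁆ ≠ 0 → (⁅y i, y j⁆ = ⁅y i, y k⁆ ∨ ⁅y i, y j⁆ = -⁅y i, y k⁆) → j = k)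
    (i j k : Fin (m + n)) (hne : ⁅finAppendProd x y i, finAppendProd x y j⁆ ≠ 0)
    (heq : ⁅finAppendProd x y i, finAppendProd x y j⁆ = ⁅finAppendProd x y i, finAppendProd x y k⁆ ∨
      ⁅finAppendProd x y i, finAppendProd x y j⁆ = -⁅finAppendProd x y i, finAppendProd x y k⁆) :
    j = k := by
  induction i using Fin.addCases <;> induction j using Fin.addCases <;>
    induction k using Fin.addCases <;> simp_all <;> solve_by_elim

end FinAppendProd

section
variable {L M : Type*} [LieRing L] [LieAlgebra ℝ L] [LieRing M] [LieAlgebra ℝ M]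
  {p₁ q₁ r₁ s₁ p₂ q₂ r₂ s₂ : ℕ} {v₁ : Fin q₁ → L} {z₁ : Fin p₁ → L}
  {v₂ : Fin q₂ → M} {z₂ : Fin p₂ → M}

theorem IsUniform.finAppendProd {r s : ℕ} (h₁ : IsUniform p₁ q₁ r s v₁ z₁)
    (h₂ : IsUniform p₂ q₂ r s v₂ z₂) (hz₁ : ∀ k, z₁ k ≠ 0) (hz₂ : ∀ k, z₂ k ≠ 0) :
    IsUniform (p₁ + p₂) (q₁ + q₂) r s (finAppendProd v₁ v₂) (finAppendProd z₁ z₂) := by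
  obtain ⟨hvz₁, hzz₁, hvv₁, hinj₁, hr₁, hs₁⟩ := h₁
  obtain ⟨hvz₂, hzz₂, hvv₂, hinj₂, hr₂, hs₂⟩ := h₂
  refine ⟨lie_finAppendProd_eq_zero hvz₁ hvz₂, lie_finAppendProd_eq_zero hzz₁ hzz₂,
    lie_finAppendProd_eq_zero_or_eq_or_eq_neg hvv₁ hvv₂,
    eq_of_lie_finAppendProd_eq_or_eq_neg hinj₁ hinj₂, fun l => ?_, fun j => ?_⟩
  · induction l using Fin.addCases with
    | left l => rw [finAppendProd_castAdd, ncard_lie_finAppendProd_eq_inl (hz₁ l), hr₁]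
    | right l => rw [finAppendProd_natAdd, ncard_lie_finAppendProd_eq_inr (hz₂ l), hr₂]
  · induction j using Fin.addCases with
    | left j => rw [ncard_lie_finAppendProd_castAdd_ne_zero, hs₁]
    | right j => rw [ncard_lie_finAppendProd_natAdd_ne_zero, hs₂]

theorem isUniform_finAppendProd_iff {r s : ℕ} (h₁ : IsUniform p₁ q₁ r₁ s₁ v₁ z₁)
    (h₂ : IsUniform p₂ q₂ r₂ s₂ v₂ z₂) (hz₁ : ∀ k, z₁ k ≠ 0) (hz₂ : ∀ k, z₂ k ≠ 0)
    (hp₁ : 0 < p₁) (hq₁ : 0 < q₁) (hp₂ : 0 < p₂) (hq₂ : 0 < q₂) :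
    IsUniform (p₁ + p₂) (q₁ + q₂) r s (finAppendProd v₁ v₂) (finAppendProd z₁ z₂) ↔
      r₁ = r ∧ s₁ = s ∧ r₂ = r ∧ s₂ = s := by
  refine ⟨fun ⟨_, _, _, _, hr, hs⟩ => ⟨?_, ?_, ?_, ?_⟩,
    fun ⟨hr₁, hs₁, hr₂, hs₂⟩ => (hr₁ ▸ hs₁ ▸ h₁).finAppendProd (hr₂ ▸ hs₂ ▸ h₂) hz₁ hz₂⟩
  · rw [← hr (Fin.castAdd p₂ ⟨0, hp₁⟩), finAppendProd_castAdd,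
      ncard_lie_finAppendProd_eq_inl (hz₁ _), h₁.2.2.2.2.1]
  · rw [← hs (Fin.castAdd q₂ ⟨0, hq₁⟩), ncard_lie_finAppendProd_castAdd_ne_zero, h₁.2.2.2.2.2]
  · rw [← hr (Fin.natAdd p₁ ⟨0, hp₂⟩), finAppendProd_natAdd,
      ncard_lie_finAppendProd_eq_inr (hz₂ _), h₂.2.2.2.2.1]
  · rw [← hs (Fin.natAdd q₁ ⟨0, hq₂⟩), ncard_lie_finAppendProd_natAdd_ne_zero, h₂.2.2.2.2.2]

end

theorem uniform_direct_sum_general {p₁ q₁ r₁ s₁ p₂ q₂ r₂ s₂ : ℕ}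
    (hp₁ : 0 < p₁) (hq₁ : 0 < q₁) (hr₁ : 0 < r₁) (hs₁ : 0 < s₁)
    (hp₂ : 0 < p₂) (hq₂ : 0 < q₂)
    {n₁ n₂ : Type*} [LieRing n₁] [LieAlgebra ℝ n₁] [LieRing n₂] [LieAlgebra ℝ n₂]
    (B₁ : Module.Basis (Fin q₁ ⊕ Fin p₁) ℝ n₁)
    (hB₁ : IsUniform p₁ q₁ r₁ s₁ (fun i => B₁ (Sum.inl i)) (fun k => B₁ (Sum.inr k)))
    (B₂ : Module.Basis (Fin q₂ ⊕ Fin p₂) ℝ n₂)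
    (hB₂ : IsUniform p₂ q₂ r₂ s₂ (fun i => B₂ (Sum.inl i)) (fun k => B₂ (Sum.inr k))) :
    let B : Module.Basis (Fin (q₁ + q₂) ⊕ Fin (p₁ + p₂)) ℝ (n₁ × n₂) :=
      (B₁.prod B₂).reindex
        ((Equiv.sumSumSumComm (Fin q₁) (Fin p₁) (Fin q₂) (Fin p₂)).trans
          (Equiv.sumCongr finSumFinEquiv finSumFinEquiv))
    ((∃ r s, 0 < r ∧ 0 < s ∧
        IsUniform (p₁ + p₂) (q₁ + q₂) r s
          (fun i => B (Sum.inl i)) (fun k => B (Sum.inr k))) ↔ (r₁ = r₂ ∧ s₁ = s₂)) ∧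
    ((r₁ = r₂ ∧ s₁ = s₂) →
      IsUniform (p₁ + p₂) (q₁ + q₂) r₁ s₁
        (fun i => B (Sum.inl i)) (fun k => B (Sum.inr k))) := by
  dsimp only
  rw [Module.Basis.prod_reindex_finSumFinEquiv_inl, Module.Basis.prod_reindex_finSumFinEquiv_inr]
  simp_rw [isUniform_finAppendProd_iff hB₁ hB₂ (fun _ => B₁.ne_zero _) (fun _ => B₂.ne_zero _)
    hp₁ hq₁ hp₂ hq₂]
  refine ⟨⟨?_, ?_⟩, ?_⟩
  · rintro ⟨r, s, -, -, rfl, rfl, rfl, rfl⟩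
    exact ⟨rfl, rfl⟩
  · rintro ⟨rfl, rfl⟩
    exact ⟨r₁, s₁, hr₁, hs₁, rfl, rfl, rfl, rfl⟩
  · rintro ⟨rfl, rfl⟩
    simp

/-- Direct sums of uniform Lie algebras: the union `B` of the images of the uniform bases
`B₁` of `n₁` and `B₂` of `n₂` in the direct sum `n₁ ⊕ n₂` is a uniform basis if and only if
`r₁ = r₂` and `s₁ = s₂`, in which case `n₁ ⊕ n₂` is uniform of type `(p₁+p₂, q₁+q₂, r₁)`
with degree `s₁` with respect to `B`. -/
theorem uniform_direct_sum {p₁ q₁ r₁ s₁ p₂ q₂ r₂ s₂ : ℕ}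
    (hp₁ : 0 < p₁) (hq₁ : 0 < q₁) (hr₁ : 0 < r₁) (hs₁ : 0 < s₁)
    (hp₂ : 0 < p₂) (hq₂ : 0 < q₂) (hr₂ : 0 < r₂) (hs₂ : 0 < s₂)
    {n₁ n₂ : Type*} [LieRing n₁] [LieAlgebra ℝ n₁] [LieRing n₂] [LieAlgebra ℝ n₂]
    (B₁ : Module.Basis (Fin q₁ ⊕ Fin p₁) ℝ n₁)
    (hB₁ : IsUniform p₁ q₁ r₁ s₁ (fun i => B₁ (Sum.inl i)) (fun k => B₁ (Sum.inr k)))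
    (B₂ : Module.Basis (Fin q₂ ⊕ Fin p₂) ℝ n₂)
    (hB₂ : IsUniform p₂ q₂ r₂ s₂ (fun i => B₂ (Sum.inl i)) (fun k => B₂ (Sum.inr k))) :
    let B : Module.Basis (Fin (q₁ + q₂) ⊕ Fin (p₁ + p₂)) ℝ (n₁ × n₂) :=
      (B₁.prod B₂).reindex
        ((Equiv.sumSumSumComm (Fin q₁) (Fin p₁) (Fin q₂) (Fin p₂)).trans
          (Equiv.sumCongr finSumFinEquiv finSumFinEquiv))
    ((∃ r s, 0 < r ∧ 0 < s ∧
        IsUniform (p₁ + p₂) (q₁ + q₂) r s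
          (fun i => B (Sum.inl i)) (fun k => B (Sum.inr k))) ↔ (r₁ = r₂ ∧ s₁ = s₂)) ∧
    ((r₁ = r₂ ∧ s₁ = s₂) →
      IsUniform (p₁ + p₂) (q₁ + q₂) r₁ s₁
        (fun i => B (Sum.inl i)) (fun k => B (Sum.inr k))) :=
  uniform_direct_sum_general hp₁ hq₁ hr₁ hs₁ hp₂ hq₂ B₁ hB₁ B₂ hB₂
end

section
/- Let n be a real Lie algebra with basis {v_1,…,v_{q₁}} ∪ {x_1,…,x_{q₂}} ∪ {z_1,…,z_p} such that: [v_i,x_j] = 0 for all i,j; the span of {v_1,…,v_{q₁}} ∪ {z_1,…,z_p} is a Lie subalgebra of n that is uniform of type (p,q₁,r₁) with degree s with respect to the uniform basis {v_1,…,v_{q₁}} ∪ {z_1,…,z_p}; and the span of {x_1,…,x_{q₂}} ∪ {z_1,…,z_p} is a Lie subalgebra of n that is uniform of type (p,q₂,r₂) with degree s with respect to the uniform basis {x_1,…,x_{q₂}} ∪ {z_1,…,z_p}. Then n is uniform of type (p, q₁+q₂, r₁+r₂) with degree s with respect to the uniform basis {v_1,…,v_{q₁}} ∪ {x_1,…,x_{q₂}}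 ∪ {z_1,…,z_p}. -/
theorem Set.ncard_setOf_eq_sum {α : Type*} [Fintype α] (P : α → Prop) [DecidablePred P] :
    {a | P a}.ncard = ∑ a, if P a then 1 else 0 := by
  rw [Set.ncard_eq_toFinset_card', Set.toFinset_ofPred, Finset.card_filter]

theorem Fin.ncard_setOf_add {m k : ℕ} (P : Fin (m + k) → Prop) :
    {i | P i}.ncard = {a | P (Fin.castAdd k a)}.ncard + {b | P (Fin.natAdd m b)}.ncard := by
  classical
  simp only [Set.ncard_setOf_eq_sum, Fin.sum_univ_add]

theorem Fin.ncard_setOf_add_prod {m k : ℕ} (P : Fin (m + k) × Fin (m + k) → Prop)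
    (hlr : ∀ a b, ¬ P (Fin.castAdd k a, Fin.natAdd m b))
    (hrl : ∀ a b, ¬ P (Fin.natAdd m b, Fin.castAdd k a)) :
    {ij | P ij}.ncard = {ab : Fin m × Fin m | P (Fin.castAdd k ab.1, Fin.castAdd k ab.2)}.ncard
      + {ab : Fin k × Fin k | P (Fin.natAdd m ab.1, Fin.natAdd m ab.2)}.ncard := by
  classical
  simp only [Set.ncard_setOf_eq_sum, Fintype.sum_prod_type, Fin.sum_univ_add]
  simp [hlr, hrl]

theorem IsUniform.append {n : Type*} [LieRing n] [LieAlgebra ℝ n] {p q₁ q₂ r₁ r₂ s : ℕ}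
    {v : Fin q₁ → n} {x : Fin q₂ → n} {z : Fin p → n} (hvx : ∀ i j, ⁅v i, x j⁆ = 0)
    (hz : ∀ k, z k ≠ 0) (h₁ : IsUniform p q₁ r₁ s v z) (h₂ : IsUniform p q₂ r₂ s x z) :
    IsUniform p (q₁ + q₂) (r₁ + r₂) s (Fin.append v x) z := by
  obtain ⟨hvz₁, hzz, hval₁, hinj₁, hpairs₁, hdeg₁⟩ := h₁
  obtain ⟨hvz₂, -, hval₂, hinj₂, hpairs₂, hdeg₂⟩ := h₂
  have hxv : ∀ i j, ⁅x j, v i⁆ = 0 := fun i j => by rw [← lie_skew, hvx, neg_zero]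
  refine ⟨?_, hzz, ?_, ?_, ?_, ?_⟩
  · intro i k
    induction i using Fin.addCases <;> simp [hvz₁, hvz₂]
  · intro i j
    induction i using Fin.addCases <;> induction j using Fin.addCases <;>
      simp [hvx, hxv, hval₁, hval₂]
  · intro i j k hne h
    induction i using Fin.addCases <;> induction j using Fin.addCases <;>
      induction k using Fin.addCases <;>
      simp only [Fin.append_left, Fin.append_right, hvx, hxv, neg_zero, or_self,
        Fin.castAdd_inj, Fin.natAdd_inj] at hne h ⊢
    all_goals first
      | exact hinj₁ _ _ _ hne h | exact hinj₂ _ _ _ hne h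
      | exact absurd h hne | exact absurd rfl hne
  · intro l
    rw [Fin.ncard_setOf_add_prod _ (fun a b => by simp [hvx, (hz l).symm])
      (fun a b => by simp [hxv, (hz l).symm])]
    simp only [Fin.append_left, Fin.append_right, hpairs₁, hpairs₂]
  · intro j
    rw [Fin.ncard_setOf_add]
    induction j using Fin.addCases <;> simp [hdeg₁, hdeg₂, hvx, hxv]

theorem uniform_concatenation_general {p q₁ q₂ r₁ r₂ s : ℕ}
    {n : Type*} [LieRing n] [LieAlgebra ℝ n]
    (B : Module.Basis (Fin (q₁ + q₂) ⊕ Fin p) ℝ n)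
    (v : Fin q₁ → n) (x : Fin q₂ → n) (z : Fin p → n)
    (hv : ∀ i, v i = B (Sum.inl (Fin.castAdd q₂ i)))
    (hx : ∀ j, x j = B (Sum.inl (Fin.natAdd q₁ j)))
    (hz : ∀ k, z k = B (Sum.inr k))
    (hvx : ∀ i j, ⁅v i, x j⁆ = 0)
    (h₁ : IsUniform p q₁ r₁ s v z)
    (h₂ : IsUniform p q₂ r₂ s x z) :
    IsUniform p (q₁ + q₂) (r₁ + r₂) s (fun i => B (Sum.inl i)) (fun k => B (Sum.inr k)) := by
  have hgen : (fun i => B (Sum.inl i)) = Fin.append v x :=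
    funext fun i => Fin.addCases (fun a => by simp [hv]) (fun b => by simp [hx]) i
  have hcentral : (fun k => B (Sum.inr k)) = z := funext fun k => (hz k).symm
  rw [hgen, hcentral]
  exact h₁.append hvx (fun k => hz k ▸ B.ne_zero _) h₂

/-- Concatenation of uniform Lie algebras: if `n` has basis
`{v_1,…,v_{q₁}} ∪ {x_1,…,x_{q₂}} ∪ {z_1,…,z_p}` with `⁅v i, x j⁆ = 0` for all `i, j`,
the span of the `v`'s and `z`'s is a subalgebra, uniform of type `(p,q₁,r₁)` with degree `s`
with respect to `{v} ∪ {z}`, and the span of the `x`'s and `z`'s is a subalgebra, uniform of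
type `(p,q₂,r₂)` with degree `s` with respect to `{x} ∪ {z}`, then `n` is uniform of type
`(p, q₁+q₂, r₁+r₂)` with degree `s` with respect to `{v} ∪ {x} ∪ {z}`. -/
theorem uniform_concatenation {p q₁ q₂ r₁ r₂ s : ℕ}
    (hp : 0 < p) (hq₁ : 0 < q₁) (hq₂ : 0 < q₂) (hr₁ : 0 < r₁) (hr₂ : 0 < r₂) (hs : 0 < s)
    {n : Type*} [LieRing n] [LieAlgebra ℝ n]
    (B : Module.Basis (Fin (q₁ + q₂) ⊕ Fin p) ℝ n)
    (v : Fin q₁ → n) (x : Fin q₂ → n) (z : Fin p → n)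
    (hv : ∀ i, v i = B (Sum.inl (Fin.castAdd q₂ i)))
    (hx : ∀ j, x j = B (Sum.inl (Fin.natAdd q₁ j)))
    (hz : ∀ k, z k = B (Sum.inr k))
    (hvx : ∀ i j, ⁅v i, x j⁆ = 0)
    (hsub₁ : ∀ a ∈ Submodule.span ℝ (Set.range v ∪ Set.range z),
      ∀ b ∈ Submodule.span ℝ (Set.range v ∪ Set.range z),
        ⁅a, b⁆ ∈ Submodule.span ℝ (Set.range v ∪ Set.range z))
    (h₁ : IsUniform p q₁ r₁ s v z)
    (hsub₂ : ∀ a ∈ Submodule.span ℝ (Set.range x ∪ Set.range z),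
      ∀ b ∈ Submodule.span ℝ (Set.range x ∪ Set.range z),
        ⁅a, b⁆ ∈ Submodule.span ℝ (Set.range x ∪ Set.range z))
    (h₂ : IsUniform p q₂ r₂ s x z) :
    IsUniform p (q₁ + q₂) (r₁ + r₂) s (fun i => B (Sum.inl i)) (fun k => B (Sum.inr k)) :=
  uniform_concatenation_general B v x z hv hx hz hvx h₁ h₂
end

section
/- Let n be a real Lie algebra that is uniform of type (1,q,r) with degree s with respect to a uniform basis {v_1,…,v_q} ∪ {z}. Then q = 2r, s = 1, and n is isomorphic to the (2r+1)-dimensional Heisenberg Lie algebra; that is, there exists a basis {x_1,…,x_r} ∪ {y_1,…,y_r} ∪ {z'} of n such that [x_i, y_i] = z' for all i = 1,…,r, and all other Lie brackets of pairs of these basis vectors are zero. -/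
structure IsBracketMatching {ι L : Type*} [LieRing L] (v : ι → L) (z : L) : Prop where
  lie_eq : ∀ i j, ⁅v i, v j⁆ = 0 ∨ ⁅v i, v j⁆ = z ∨ ⁅v i, v j⁆ = -z
  eq_of_lie_ne_zero : ∀ i j k, ⁅v i, v j⁆ ≠ 0 → ⁅v i, v k⁆ ≠ 0 → j = k
  exists_lie_ne_zero : ∀ j, ∃ i, ⁅v i, v j⁆ ≠ 0
  ne_neg : z ≠ -z

def positivePairs {ι L : Type*} [LieRing L] (v : ι → L) (z : L) : Set (ι × ι) :=
  {p | ⁅v p.1, v p.2⁆ = z}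

theorem lie_ne_zero_comm {L : Type*} [LieRing L] {x y : L} : ⁅x, y⁆ ≠ 0 ↔ ⁅y, x⁆ ≠ 0 := by
  rw [← lie_skew, neg_ne_zero]

namespace IsBracketMatching

variable {ι L : Type*} [LieRing L] {v : ι → L} {z : L}

theorem ne_zero (M : IsBracketMatching v z) : z ≠ 0 := by
  rintro rfl
  exact M.ne_neg neg_zero.symm

theorem lie_eq_zero_of_ne (M : IsBracketMatching v z) {i j k : ι} (hij : ⁅v i, v j⁆ ≠ 0)
    (hkj : k ≠ j) : ⁅v i, v k⁆ = 0 := by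
  by_contra hik
  exact hkj (M.eq_of_lie_ne_zero i k j hik hij)

theorem lie_ne_zero_of_mem (M : IsBracketMatching v z) {p : ι × ι}
    (hp : p ∈ positivePairs v z) : ⁅v p.1, v p.2⁆ ≠ 0 := by
  rw [hp]
  exact M.ne_zero

theorem lie_swap_of_mem {p : ι × ι} (hp : p ∈ positivePairs v z) : ⁅v p.2, v p.1⁆ = -z := by
  rw [← lie_skew, hp]

theorem fst_ne_snd (M : IsBracketMatching v z) {p p' : ι × ι} (hp : p ∈ positivePairs v z)
    (hp' : p' ∈ positivePairs v z) : p.1 ≠ p'.2 := by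
  intro h
  have hswap : ⁅v p.1, v p'.1⁆ = -z := by rw [h]; exact lie_swap_of_mem hp'
  have hsnd : p.2 = p'.1 := M.eq_of_lie_ne_zero _ _ _ (M.lie_ne_zero_of_mem hp)
    (by rw [hswap]; exact neg_ne_zero.2 M.ne_zero)
  apply M.ne_neg
  rw [← hswap, ← hsnd]
  exact hp.symm

theorem fst_injOn (M : IsBracketMatching v z) : Set.InjOn Prod.fst (positivePairs v z) := by
  intro p hp p' hp' h
  refine Prod.ext h (M.eq_of_lie_ne_zero p.1 _ _ (M.lie_ne_zero_of_mem hp) ?_)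
  rw [h]
  exact M.lie_ne_zero_of_mem hp'

theorem snd_injOn (M : IsBracketMatching v z) : Set.InjOn Prod.snd (positivePairs v z) := by
  intro p hp p' hp' h
  refine Prod.ext
    (M.eq_of_lie_ne_zero p.2 _ _ (lie_ne_zero_comm.1 (M.lie_ne_zero_of_mem hp)) ?_) h
  rw [h]
  exact lie_ne_zero_comm.1 (M.lie_ne_zero_of_mem hp')

theorem exists_mem_fst_or_snd_eq (M : IsBracketMatching v z) (j : ι) :
    ∃ p ∈ positivePairs v z, p.1 = j ∨ p.2 = j := by
  obtain ⟨i, hi⟩ := M.exists_lie_ne_zero j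
  rcases M.lie_eq i j with h | h | h
  · exact absurd h hi
  · exact ⟨(i, j), h, Or.inr rfl⟩
  · exact ⟨(j, i), by rw [positivePairs, Set.mem_ofPred_eq, ← lie_skew, h, neg_neg], Or.inl rfl⟩

noncomputable def sumEquiv (M : IsBracketMatching v z) :
    positivePairs v z ⊕ positivePairs v z ≃ ι :=
  Equiv.ofBijective (Sum.elim (fun p => p.1.1) (fun p => p.1.2)) <| by
    refine ⟨?_, fun j => ?_⟩
    · rintro (p | p) (p' | p') h
      · exact congrArg Sum.inl (Subtype.ext (M.fst_injOn p.2 p'.2 h))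
      · exact absurd h (M.fst_ne_snd p.2 p'.2)
      · exact absurd h.symm (M.fst_ne_snd p'.2 p.2)
      · exact congrArg Sum.inr (Subtype.ext (M.snd_injOn p.2 p'.2 h))
    · obtain ⟨p, hp, h | h⟩ := M.exists_mem_fst_or_snd_eq j
      exacts [⟨Sum.inl ⟨p, hp⟩, h⟩, ⟨Sum.inr ⟨p, hp⟩, h⟩]

@[simp]
theorem sumEquiv_inl (M : IsBracketMatching v z) (p : positivePairs v z) :
    M.sumEquiv (Sum.inl p) = p.1.1 := rfl

@[simp]
theorem sumEquiv_inr (M : IsBracketMatching v z) (p : positivePairs v z) :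
    M.sumEquiv (Sum.inr p) = p.1.2 := rfl

theorem lie_fst_fst (M : IsBracketMatching v z) {p p' : ι × ι} (hp : p ∈ positivePairs v z)
    (hp' : p' ∈ positivePairs v z) : ⁅v p.1, v p'.1⁆ = 0 :=
  M.lie_eq_zero_of_ne (M.lie_ne_zero_of_mem hp) (M.fst_ne_snd hp' hp)

theorem lie_snd_snd (M : IsBracketMatching v z) {p p' : ι × ι} (hp : p ∈ positivePairs v z)
    (hp' : p' ∈ positivePairs v z) : ⁅v p.2, v p'.2⁆ = 0 :=
  M.lie_eq_zero_of_ne (lie_ne_zero_comm.1 (M.lie_ne_zero_of_mem hp)) (M.fst_ne_snd hp hp').symm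

theorem lie_fst_snd_of_ne (M : IsBracketMatching v z) {p p' : ι × ι}
    (hp : p ∈ positivePairs v z) (hp' : p' ∈ positivePairs v z) (hne : p ≠ p') :
    ⁅v p.1, v p'.2⁆ = 0 :=
  M.lie_eq_zero_of_ne (M.lie_ne_zero_of_mem hp) fun h => hne (M.snd_injOn hp hp' h.symm)

theorem ncard_setOf_lie_ne_zero (M : IsBracketMatching v z) (j : ι) :
    {i | ⁅v i, v j⁆ ≠ 0}.ncard = 1 := by
  obtain ⟨i, hi⟩ := M.exists_lie_ne_zero j
  refine Set.ncard_eq_one.2 ⟨i, Set.eq_singleton_iff_unique_mem.2 ⟨hi, fun k hk => ?_⟩⟩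
  exact M.eq_of_lie_ne_zero j k i (lie_ne_zero_comm.1 hk) (lie_ne_zero_comm.1 hi)

end IsBracketMatching

theorem IsUniform.isBracketMatching {q r s : ℕ} {n : Type*} [LieRing n] [LieAlgebra ℝ n]
    {v : Fin q → n} {z : Fin 1 → n} (h : IsUniform 1 q r s v z) (hs : 0 < s) (hz : z 0 ≠ 0) :
    IsBracketMatching v (z 0) := by
  obtain ⟨-, -, hval, hsign, -, hdeg⟩ := h
  have lie_eq : ∀ i j, ⁅v i, v j⁆ = 0 ∨ ⁅v i, v j⁆ = z 0 ∨ ⁅v i, v j⁆ = -z 0 := by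
    intro i j
    rcases hval i j with h | ⟨k, hk⟩
    · exact Or.inl h
    · exact Or.inr (Subsingleton.elim k 0 ▸ hk)
  refine ⟨lie_eq, fun i j k hj hk => hsign i j k hj ?_, fun j => ?_, ?_⟩
  · rcases lie_eq i j with h | h | h <;> rcases lie_eq i k with h' | h' | h' <;>
      simp_all
  · exact Set.nonempty_of_ncard_ne_zero (s := {i | ⁅v i, v j⁆ ≠ 0})
      (by rw [hdeg j]; exact hs.ne')
  · have := IsAddTorsionFree.of_isTorsionFree ℝ n
    rwa [Ne, self_eq_neg]

theorem uniform_p_eq_one_heisenberg_general {q r s : ℕ}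
    (hq : 0 < q) (hs : 0 < s)
    {n : Type*} [LieRing n] [LieAlgebra ℝ n]
    (B : Module.Basis (Fin q ⊕ Fin 1) ℝ n)
    (hB : IsUniform 1 q r s (fun i => B (Sum.inl i)) (fun k => B (Sum.inr k))) :
    q = 2 * r ∧ s = 1 ∧
    ∃ (x y : Fin r → n) (z' : n),
      (∃ C : Module.Basis ((Fin r ⊕ Fin r) ⊕ Fin 1) ℝ n,
        (∀ i, C (Sum.inl (Sum.inl i)) = x i) ∧
        (∀ i, C (Sum.inl (Sum.inr i)) = y i) ∧
        C (Sum.inr 0) = z') ∧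
      (∀ i, ⁅x i, y i⁆ = z') ∧
      (∀ i j, ⁅x i, x j⁆ = 0) ∧
      (∀ i j, ⁅y i, y j⁆ = 0) ∧
      (∀ i j, i ≠ j → ⁅x i, y j⁆ = 0) ∧
      (∀ i, ⁅x i, z'⁆ = 0) ∧
      (∀ i, ⁅y i, z'⁆ = 0) := by
  set v : Fin q → n := fun i => B (Sum.inl i)
  have M := hB.isBracketMatching hs (B.ne_zero _)
  obtain ⟨hcentral, -, -, -, hpairs, hdeg⟩ := hB
  let e : Fin r ≃ positivePairs v (B (Sum.inr 0)) := (Finite.equivFinOfCardEq (hpairs 0)).symm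
  let g : (Fin r ⊕ Fin r) ≃ Fin q := (Equiv.sumCongr e e).trans M.sumEquiv
  refine ⟨?_, ?_, fun i => v (e i).1.1, fun i => v (e i).1.2, B (Sum.inr 0),
    ⟨B.reindex (Equiv.sumCongr g.symm (Equiv.refl _)), fun i => ?_, fun i => ?_, ?_⟩,
    fun i => (e i).2, fun i j => M.lie_fst_fst (e i).2 (e j).2,
    fun i j => M.lie_snd_snd (e i).2 (e j).2,
    fun i j hij =>
      M.lie_fst_snd_of_ne (e i).2 (e j).2 (Subtype.coe_injective.ne (e.injective.ne hij)),
    fun i => hcentral _ 0, fun i => hcentral _ 0⟩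
  · simpa [two_mul] using (Nat.card_congr g).symm
  · rw [← hdeg ⟨0, hq⟩, M.ncard_setOf_lie_ne_zero]
  all_goals simp [g, v]

/-- A uniform Lie algebra of type `(1,q,r)` satisfies `q = 2r` and `s = 1`, and is
isomorphic to the `(2r+1)`-dimensional Heisenberg algebra: it has a basis
`{x_1,…,x_r} ∪ {y_1,…,y_r} ∪ {z'}` with `⁅x i, y i⁆ = z'` and all other brackets of pairs
of basis vectors zero. -/
theorem uniform_p_eq_one_heisenberg {q r s : ℕ}
    (hq : 0 < q) (hr : 0 < r) (hs : 0 < s)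
    {n : Type*} [LieRing n] [LieAlgebra ℝ n]
    (B : Module.Basis (Fin q ⊕ Fin 1) ℝ n)
    (hB : IsUniform 1 q r s (fun i => B (Sum.inl i)) (fun k => B (Sum.inr k))) :
    q = 2 * r ∧ s = 1 ∧
    ∃ (x y : Fin r → n) (z' : n),
      (∃ C : Module.Basis ((Fin r ⊕ Fin r) ⊕ Fin 1) ℝ n,
        (∀ i, C (Sum.inl (Sum.inl i)) = x i) ∧
        (∀ i, C (Sum.inl (Sum.inr i)) = y i) ∧
        C (Sum.inr 0) = z') ∧
      (∀ i, ⁅x i, y i⁆ = z') ∧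
      (∀ i j, ⁅x i, x j⁆ = 0) ∧
      (∀ i j, ⁅y i, y j⁆ = 0) ∧
      (∀ i j, i ≠ j → ⁅x i, y j⁆ = 0) ∧
      (∀ i, ⁅x i, z'⁆ = 0) ∧
      (∀ i, ⁅y i, z'⁆ = 0) :=
  uniform_p_eq_one_heisenberg_general hq hs B hB
end
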